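/- The characteristic polynomial of the 7×7 matrix C is (x − 1/2)²·(x − 11/16)²·(x − 13/16)²·(x − 1); equivalently, the eigenvalues of C, with multiplicity, are {1/2, 1/2, 11/16, 11/16, 13/16, 13/16, 1}. -/
import Mathlib

open Matrix Real MeasureTheory

noncomputable def C : Matrix (Fin 7) (Fin 7) ℝ :=
  !![13/16, 0, Real.sqrt 15 / 16, 0, 0, 0, 0;
     0, 1/2, 0, 0, 0, 0, 0;
     Real.sqrt 15 / 16, 0, 11/16, 0, 0, 0, 0;
     0, 0, 0, 49/64, 0, -(Real.sqrt 15 / 64), 0;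
     0, 0, 0, 0, 103/128, 0, -(Real.sqrt 15 / 128);
     0, 0, 0, -(Real.sqrt 15 / 64), 0, 47/64, 0;
     0, 0, 0, 0, -(Real.sqrt 15 / 128), 0, 89/128]

open Polynomial in
lemma charpoly_fin_two' (a b c d : ℝ) :
    (!![a, b; c, d]).charpoly = (X - Polynomial.C a) * (X - Polynomial.C d)
      - Polynomial.C (b * c) := by
  rw [Matrix.charpoly, Matrix.det_fin_two]
  simp [C_mul]

open Polynomial in
lemma charpoly_fin_one' (a : ℝ) :
    (!![a]).charpoly = X - Polynomial.C a := by
  rw [Matrix.charpoly, Matrix.det_fin_one]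
  simp

open Polynomial in
lemma quad (a b : ℝ) :
    (X - Polynomial.C a) * (X - Polynomial.C b)
      = X ^ 2 - Polynomial.C (a + b) * X + Polynomial.C (a * b) := by
  rw [C_add, C_mul]; ring

def e7 : (Fin 2 ⊕ (Fin 1 ⊕ (Fin 2 ⊕ Fin 2))) ≃ Fin 7 where
  toFun x := match x with
    | .inl ⟨0, _⟩ => 0
    | .inl ⟨1, _⟩ => 2
    | .inr (.inl ⟨0, _⟩) => 1
    | .inr (.inr (.inl ⟨0, _⟩)) => 3
    | .inr (.inr (.inl ⟨1, _⟩)) => 5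
    | .inr (.inr (.inr ⟨0, _⟩)) => 4
    | .inr (.inr (.inr ⟨1, _⟩)) => 6
  invFun y := match y with
    | ⟨0, _⟩ => .inl 0
    | ⟨1, _⟩ => .inr (.inl 0)
    | ⟨2, _⟩ => .inl 1
    | ⟨3, _⟩ => .inr (.inr (.inl 0))
    | ⟨4, _⟩ => .inr (.inr (.inr 0))
    | ⟨5, _⟩ => .inr (.inr (.inl 1))
    | ⟨6, _⟩ => .inr (.inr (.inr 1))
  left_inv := by decide
  right_inv := by decide

noncomputable def B : Matrix (Fin 2 ⊕ (Fin 1 ⊕ (Fin 2 ⊕ Fin 2)))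
    (Fin 2 ⊕ (Fin 1 ⊕ (Fin 2 ⊕ Fin 2))) ℝ :=
  fromBlocks !![13/16, Real.sqrt 15 / 16; Real.sqrt 15 / 16, 11/16] 0 0
    (fromBlocks !![(1/2 : ℝ)] 0 0
      (fromBlocks !![49/64, -(Real.sqrt 15 / 64); -(Real.sqrt 15 / 64), 47/64] 0 0
        !![103/128, -(Real.sqrt 15 / 128); -(Real.sqrt 15 / 128), 89/128]))

lemma C_eq : C = Matrix.reindex e7 e7 B := by
  ext i j
  fin_cases i <;> fin_cases j <;> rfl

theorem C_charpoly :
    C.charpoly = (Polynomial.X - Polynomial.C (1/2))^2 *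
      (Polynomial.X - Polynomial.C (11/16))^2 *
      (Polynomial.X - Polynomial.C (13/16))^2 *
      (Polynomial.X - Polynomial.C 1) := by
  have hs : Real.sqrt 15 * Real.sqrt 15 = 15 := Real.mul_self_sqrt (by norm_num)
  rw [C_eq, Matrix.charpoly_reindex, B, Matrix.charpoly_fromBlocks_zero₁₂,
    Matrix.charpoly_fromBlocks_zero₁₂, Matrix.charpoly_fromBlocks_zero₁₂,
    charpoly_fin_two', charpoly_fin_two', charpoly_fin_two', charpoly_fin_one']
  have c1 : Real.sqrt 15 / 16 * (Real.sqrt 15 / 16) = 15 / 256 := by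
    rw [div_mul_div_comm, hs]; norm_num
  have c2 : -(Real.sqrt 15 / 64) * -(Real.sqrt 15 / 64) = 15 / 4096 := by
    rw [neg_mul_neg, div_mul_div_comm, hs]; norm_num
  have c3 : -(Real.sqrt 15 / 128) * -(Real.sqrt 15 / 128) = 15 / 16384 := by
    rw [neg_mul_neg, div_mul_div_comm, hs]; norm_num
  rw [c1, c2, c3]
  have q1 : (Polynomial.X - Polynomial.C ((13:ℝ)/16)) * (Polynomial.X - Polynomial.C (11/16))
      - Polynomial.C (15/256)
      = (Polynomial.X - Polynomial.C 1) * (Polynomial.X - Polynomial.C (1/2)) := by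
    rw [quad, quad, add_sub_assoc, ← Polynomial.C_sub]; norm_num
  have q2 : (Polynomial.X - Polynomial.C ((49:ℝ)/64)) * (Polynomial.X - Polynomial.C (47/64))
      - Polynomial.C (15/4096)
      = (Polynomial.X - Polynomial.C (11/16)) * (Polynomial.X - Polynomial.C (13/16)) := by
    rw [quad, quad, add_sub_assoc, ← Polynomial.C_sub]; norm_num
  have q3 : (Polynomial.X - Polynomial.C ((103:ℝ)/128)) * (Polynomial.X - Polynomial.C (89/128))
      - Polynomial.C (15/16384)
      = (Polynomial.X - Polynomial.C (11/16)) * (Polynomial.X - Polynomial.C (13/16)) := by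
    rw [quad, quad, add_sub_assoc, ← Polynomial.C_sub]; norm_num
  rw [q1, q2, q3]
  ring
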